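/- arXiv:2502.20631 — 8 statements merged into one kernel-verified Lean document; each statement's English description precedes it below -/
import Mathlib

section
/- Let ε > 0 and let g : [0, ε) → ℝ be continuous with g(0) = 0. Assume g is differentiable on (0, ε) with g'(t) ≠ 0 for all t ∈ (0, ε), and assume that g(t)/g'(t) converges to a real number L as t → 0⁺. Then L = 0. -/
open Set Filter

/-- **Lemma 2.1 of the paper.** If `g : [0, ε) → ℝ` is continuous with `g 0 = 0`,
differentiable on `(0, ε)` with nonvanishing derivative there, and `g t / g' t`
converges to a real number `L` as `t → 0⁺`, then `L = 0`. -/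
theorem lemma_estimate_derivative (ε : ℝ) (hε : 0 < ε) (g g' : ℝ → ℝ)
    (hcont : ContinuousOn g (Set.Ico 0 ε)) (hg0 : g 0 = 0)
    (hderiv : ∀ t ∈ Set.Ioo 0 ε, HasDerivAt g (g' t) t)
    (hne : ∀ t ∈ Set.Ioo 0 ε, g' t ≠ 0) (L : ℝ)
    (hlim : Tendsto (fun t => g t / g' t) (nhdsWithin 0 (Set.Ioi 0)) (nhds L)) :
    L = 0 := by
  by_contra hL0
  have hLpos : 0 < |L| := abs_pos.2 hL0
  have hL : (0:ℝ) < |L| / 2 := by positivity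
  -- eventually near 0⁺, the quotient is large and t ∈ (0, ε)
  have hev : ∀ᶠ t in nhdsWithin 0 (Set.Ioi 0),
      |L| / 2 < |g t / g' t| ∧ t ∈ Set.Ioo 0 ε := by
    filter_upwards [hlim (Metric.ball_mem_nhds L hL),
      Ioo_mem_nhdsGT_of_mem (Set.left_mem_Ico.2 hε)] with t ht ht2
    refine ⟨?_, ht2⟩
    have h1 : |g t / g' t - L| < |L| / 2 := by
      simpa [Real.dist_eq] using ht
    have h2 : |L| - |g t / g' t| ≤ |g t / g' t - L| := by
      have := abs_sub_abs_le_abs_sub L (g t / g' t)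
      rwa [abs_sub_comm] at this
    linarith
  obtain ⟨u, hu, hsub⟩ := mem_nhdsGT_iff_exists_Ioo_subset.1 hev
  set δ : ℝ := min u ε with hδdef
  have hδ0 : 0 < δ := lt_min hu hε
  have hsub' : ∀ t ∈ Set.Ioo 0 δ,
      |L| / 2 < |g t / g' t| ∧ t ∈ Set.Ioo 0 ε := by
    intro t ht
    exact hsub ⟨ht.1, lt_of_lt_of_le ht.2 (min_le_left u ε)⟩
  have hgne : ∀ t ∈ Set.Ioo 0 δ, g t ≠ 0 := by
    intro t ht hgt
    have := (hsub' t ht).1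
    rw [hgt, zero_div, abs_zero] at this
    linarith
  set C : ℝ := 2 / |L| with hCdef
  have hC : 0 < C := by positivity
  -- derivative of log ∘ g on (0, δ) is bounded by C
  have hlogderiv : ∀ t ∈ Set.Ioo 0 δ,
      HasDerivWithinAt (fun s => Real.log (g s)) ((g t)⁻¹ * g' t) (Set.Ioo 0 δ) t := by
    intro t ht
    exact ((Real.hasDerivAt_log (hgne t ht)).comp t
      (hderiv t (hsub' t ht).2)).hasDerivWithinAt
  have hbound : ∀ t ∈ Set.Ioo 0 δ, ‖(g t)⁻¹ * g' t‖ ≤ C := by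
    intro t ht
    have htε := (hsub' t ht).2
    have hb : 0 < |g' t| := abs_pos.2 (hne t htε)
    have ha : 0 < |g t| := abs_pos.2 (hgne t ht)
    have h1 : |L| / 2 < |g t| / |g' t| := by
      have := (hsub' t ht).1
      rwa [abs_div] at this
    have h2 : |L| / 2 * |g' t| < |g t| := (lt_div_iff₀ hb).1 h1
    have h3 : |g' t| / |g t| < 2 / |L| := by
      rw [div_lt_div_iff₀ ha hLpos]
      nlinarith
    have : ‖(g t)⁻¹ * g' t‖ = |g' t| / |g t| := by
      rw [Real.norm_eq_abs, abs_mul, abs_inv, inv_mul_eq_div]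
    rw [this]
    exact h3.le
  -- MVT: log |g| varies by at most C * δ on (0, δ)
  have ht0 : δ / 2 ∈ Set.Ioo 0 δ := ⟨by linarith, by linarith⟩
  have hkey : ∀ s ∈ Set.Ioo 0 (δ / 2),
      Real.exp (Real.log (g (δ / 2)) - C * δ) ≤ |g s| := by
    intro s hs
    have hsδ : s ∈ Set.Ioo 0 δ := ⟨hs.1, by linarith [hs.2]⟩
    have hmvt := (convex_Ioo (0:ℝ) δ).norm_image_sub_le_of_norm_hasDerivWithin_le
      hlogderiv hbound hsδ ht0
    obtain ⟨hs1, hs2⟩ := hs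
    have hdist : ‖(δ / 2 : ℝ) - s‖ ≤ δ := by
      rw [Real.norm_eq_abs]
      exact abs_le.2 ⟨by linarith, by linarith⟩
    have hmvt' : ‖Real.log (g (δ / 2)) - Real.log (g s)‖ ≤ C * δ := by
      calc ‖Real.log (g (δ / 2)) - Real.log (g s)‖
          ≤ C * ‖(δ / 2 : ℝ) - s‖ := by simpa [norm_sub_rev] using hmvt
        _ ≤ C * δ := by nlinarith
    have hge : Real.log (g (δ / 2)) - C * δ ≤ Real.log (g s) := by
      have := abs_le.1 (by rwa [Real.norm_eq_abs] at hmvt')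
      linarith [this.2]
    calc Real.exp (Real.log (g (δ / 2)) - C * δ)
        ≤ Real.exp (Real.log (g s)) := Real.exp_le_exp.2 hge
      _ = Real.exp (Real.log |g s|) := by rw [Real.log_abs]
      _ = |g s| := Real.exp_log (abs_pos.2 (hgne s hsδ))
  set c : ℝ := Real.exp (Real.log (g (δ / 2)) - C * δ) with hc
  have hcpos : 0 < c := Real.exp_pos _
  -- g tends to 0 along 0⁺
  have hg0' : Tendsto g (nhdsWithin 0 (Set.Ioi 0)) (nhds 0) := by
    have h1 : Tendsto g (nhdsWithin 0 (Set.Ico 0 ε)) (nhds 0) := by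
      have := hcont 0 (Set.left_mem_Ico.2 hε)
      rwa [ContinuousWithinAt, hg0] at this
    refine h1.mono_left ?_
    rw [← nhdsWithin_Ioo_eq_nhdsGT hε]
    exact nhdsWithin_mono 0 Set.Ioo_subset_Ico_self
  have hsmall : ∀ᶠ s in nhdsWithin 0 (Set.Ioi 0), |g s| < c := by
    have := Metric.tendsto_nhds.1 hg0' c hcpos
    filter_upwards [this] with s hs
    simpa [Real.dist_eq] using hs
  have hbig : ∀ᶠ s in nhdsWithin 0 (Set.Ioi 0), c ≤ |g s| := by
    filter_upwards [Ioo_mem_nhdsGT_of_mem (Set.left_mem_Ico.2 (by linarith : (0:ℝ) < δ / 2))]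
      with s hs
    exact hkey s hs
  obtain ⟨s, h1, h2⟩ := (hsmall.and hbig).exists
  linarith
end

section
/- Let ε > 0 and let g : (0, ε) → ℝ be differentiable with 0 < g(t) < 1 for all t ∈ (0, ε), and suppose g(t) → 0 as t → 0⁺. If the quotient g'(t)/(g(t)·log g(t)) converges in the extended real numbers to some l ∈ [-∞, +∞] as t → 0⁺, then l = -∞. -/
open Set Filter

/-- **Lemma 2.2 of the paper.** If `g : (0, ε) → ℝ` is differentiable with
`0 < g t < 1` on `(0, ε)`, `g t → 0` as `t → 0⁺`, and the quotient
`g' t / (g t * log (g t))` converges in the extended reals to some `l`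
as `t → 0⁺`, then `l = -∞`. -/
theorem lemma_estimate_derivative_log (ε : ℝ) (hε : 0 < ε) (g g' : ℝ → ℝ)
    (hderiv : ∀ t ∈ Set.Ioo 0 ε, HasDerivAt g (g' t) t)
    (hpos : ∀ t ∈ Set.Ioo 0 ε, 0 < g t)
    (hlt : ∀ t ∈ Set.Ioo 0 ε, g t < 1)
    (hg0 : Tendsto g (nhdsWithin 0 (Set.Ioi 0)) (nhds 0)) (l : EReal)
    (hlim : Tendsto (fun t => ((g' t / (g t * Real.log (g t)) : ℝ) : EReal))
      (nhdsWithin 0 (Set.Ioi 0)) (nhds l)) :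
    l = ⊥ := by
  by_contra hne
  -- choose a real lower bound `M < l`
  obtain ⟨M, hM⟩ : ∃ M : ℝ, (M : EReal) < l := by
    induction l using EReal.rec with
    | bot => exact absurd rfl hne
    | coe x => exact ⟨x - 1, by exact_mod_cast sub_one_lt x⟩
    | top => exact ⟨0, EReal.coe_lt_top 0⟩
  set q : ℝ → ℝ := fun t => g' t / (g t * Real.log (g t)) with hq
  -- eventually `M < q t`
  have hev : ∀ᶠ t in nhdsWithin 0 (Set.Ioi 0), M < q t := by
    filter_upwards [hlim.eventually (eventually_gt_nhds hM)] with t ht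
    exact_mod_cast ht
  have hIoo : Set.Ioo (0:ℝ) ε ∈ nhdsWithin (0:ℝ) (Set.Ioi 0) :=
    Ioo_mem_nhdsGT_of_mem (left_mem_Ico.2 hε)
  have hmem : {t : ℝ | M < q t ∧ t ∈ Set.Ioo 0 ε} ∈ nhdsWithin (0:ℝ) (Set.Ioi 0) := by
    filter_upwards [hev, hIoo] with t h1 h2
    exact ⟨h1, h2⟩
  obtain ⟨δ, hδ, hsub⟩ := mem_nhdsGT_iff_exists_Ioo_subset.1 hmem
  have hδ0 : (0:ℝ) < δ := hδ
  set h : ℝ → ℝ := fun t => Real.log (-Real.log (g t)) with hh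
  set k : ℝ → ℝ := fun t => h t - M * t with hk
  -- derivative of `k` on `Ioo 0 δ`
  have hkderiv : ∀ t ∈ Set.Ioo (0:ℝ) δ, HasDerivAt k (q t - M) t := by
    intro t ht
    obtain ⟨hqt, htε⟩ := hsub ht
    have hgpos := hpos t htε
    have hglt := hlt t htε
    have hlogneg : Real.log (g t) < 0 := Real.log_neg hgpos hglt
    have h1 : HasDerivAt (fun t => Real.log (g t)) (g' t / g t) t :=
      (hderiv t htε).log hgpos.ne'
    have h2 : HasDerivAt (fun t => -Real.log (g t)) (-(g' t / g t)) t := h1.neg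
    have h3 : HasDerivAt (fun t => Real.log (-Real.log (g t)))
        (-(g' t / g t) / -Real.log (g t)) t := h2.log (neg_pos.2 hlogneg).ne'
    have h4 : HasDerivAt (fun x : ℝ => M * x) (M * 1) t := (hasDerivAt_id t).const_mul M
    have heq : -(g' t / g t) / -Real.log (g t) - M * 1 = q t - M := by
      rw [neg_div_neg_eq, div_div, mul_one, hq]
    exact heq ▸ (h3.sub h4)
  -- `k` is strictly monotone on `Ioo 0 δ`
  have hmono : StrictMonoOn k (Set.Ioo 0 δ) := by
    apply strictMonoOn_of_hasDerivWithinAt_pos (convex_Ioo 0 δ)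
      (fun t ht => (hkderiv t ht).continuousAt.continuousWithinAt)
    · intro t ht
      rw [interior_Ioo] at ht
      exact ((hkderiv t ht).hasDerivWithinAt)
    · intro t ht
      rw [interior_Ioo] at ht
      exact sub_pos.2 (hsub ht).1
  -- `h` tends to `+∞` at `0⁺`
  have hgIoi : ∀ᶠ t in nhdsWithin 0 (Set.Ioi 0), g t ∈ Set.Ioi (0:ℝ) := by
    filter_upwards [hIoo] with t ht
    exact hpos t ht
  have hg0' : Tendsto g (nhdsWithin 0 (Set.Ioi 0)) (nhdsWithin 0 (Set.Ioi 0)) :=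
    tendsto_nhdsWithin_iff.2 ⟨hg0, hgIoi⟩
  have hlogbot : Tendsto (fun t => Real.log (g t)) (nhdsWithin 0 (Set.Ioi 0)) atBot :=
    Real.tendsto_log_nhdsGT_zero.comp hg0'
  have hhtop : Tendsto h (nhdsWithin 0 (Set.Ioi 0)) atTop :=
    Real.tendsto_log_atTop.comp (tendsto_neg_atBot_atTop.comp hlogbot)
  -- derive a contradiction
  set b : ℝ := δ / 2 with hb
  have hbmem : b ∈ Set.Ioo (0:ℝ) δ := ⟨by positivity, by simp [hb]; linarith⟩
  set C : ℝ := h b - M * b + |M| * δ with hC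
  have hfin : ∀ᶠ a in nhdsWithin 0 (Set.Ioi 0), C < h a := hhtop.eventually_gt_atTop C
  have hIb : Set.Ioo (0:ℝ) b ∈ nhdsWithin (0:ℝ) (Set.Ioi 0) :=
    Ioo_mem_nhdsGT_of_mem (left_mem_Ico.2 hbmem.1)
  obtain ⟨a, hCa, hab⟩ := (hfin.and hIb :
    ∀ᶠ a in nhdsWithin 0 (Set.Ioi 0), C < h a ∧ a ∈ Set.Ioo 0 b).exists
  have haδ : a ∈ Set.Ioo (0:ℝ) δ := ⟨hab.1, hab.2.trans hbmem.2⟩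
  have hka : k a < k b := hmono haδ hbmem hab.2
  have hMa : M * a ≤ |M| * δ := by
    calc M * a ≤ |M * a| := le_abs_self _
    _ = |M| * |a| := abs_mul M a
    _ ≤ |M| * δ := by
        apply mul_le_mul_of_nonneg_left _ (abs_nonneg M)
        rw [abs_of_pos hab.1]; exact le_of_lt haδ.2
  have : h a < C := by
    have := hka
    simp only [hk] at this
    have h1 : h a < h b - M * b + M * a := by linarith
    linarith
  linarith
end

section
/- Let E and F be finite-dimensional real inner product spaces with E nontrivial, let λ ≥ 1 be a real number, and let A, B : E → F be continuous linear maps with operator norms ‖A‖ ≤ λ and ‖B‖ ≤ λ. Then δ(Γ_A, Γ_B) ≥ (√2 / (2λ√(1+λ²))) · ‖A − B‖, where ‖A − B‖ is the operator norm of A − B. -/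
/-!
For a unit vector `u`, the point `p = (u, Au) / ‖(u, Au)‖` lies on `Γ_A ∩ 𝕊`. For any point
`q = (w, Bw)` of `Γ_B` we have `(A - B) u / ‖(u, Au)‖ = p₂ - B p₁ = (p₂ - Bw) + B (w - p₁)`,
whose norm is at most `λ (‖p₁ - w‖ + ‖p₂ - Bw‖) ≤ √2 λ ‖p - q‖` (this is where `λ ≥ 1` enters).
As `‖(u, Au)‖ ≤ √(1 + λ²)`, this gives `‖(A - B) u‖ ≤ √2 λ √(1 + λ²) · dist(p, Γ_B ∩ 𝕊)`,
and the distance from `p` to `Γ_B ∩ 𝕊` is bounded by the Hausdorff distance.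
-/

open Set Filter

/-- The distance `δ(L₁, L₂)`: the Hausdorff distance between `L₁ ∩ 𝕊` and `L₂ ∩ 𝕊`,
where `𝕊` is the unit sphere. -/
noncomputable def sphereDist {X : Type*} [NormedAddCommGroup X] (S T : Set X) : ℝ :=
  Metric.hausdorffDist (S ∩ Metric.sphere 0 1) (T ∩ Metric.sphere 0 1)

/-- The graph `Γ_A = {(u, A u) : u ∈ E}` of a continuous linear map `A : E → F`, as a
subset of `E × F` equipped with the Euclidean product norm `‖(u,v)‖ = (‖u‖² + ‖v‖²)^(1/2)`. -/
def graphSet {E F : Type*} [NormedAddCommGroup E] [InnerProductSpace ℝ E]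
    [NormedAddCommGroup F] [InnerProductSpace ℝ F] (A : E →L[ℝ] F) :
    Set (WithLp 2 (E × F)) :=
  {p | (WithLp.equiv 2 (E × F) p).2 = A (WithLp.equiv 2 (E × F) p).1}

open Metric

theorem WithLp.prod_norm_fst_add_norm_snd_le_of_L2 {E F : Type*} [SeminormedAddCommGroup E]
    [SeminormedAddCommGroup F] (x : WithLp 2 (E × F)) :
    ‖x.fst‖ + ‖x.snd‖ ≤ √2 * ‖x‖ := by
  rw [WithLp.prod_norm_eq_of_L2, ← Real.sqrt_mul zero_le_two]
  exact Real.le_sqrt_of_sq_le (by nlinarith [sq_nonneg (‖x.fst‖ - ‖x.snd‖)])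

section NormedSpace

variable {E F : Type*} [NormedAddCommGroup E] [NormedSpace ℝ E] [NormedAddCommGroup F]
  [NormedSpace ℝ F]

theorem norm_snd_sub_apply_fst_le_dist {B : E →L[ℝ] F} {lam : ℝ} (hlam : 1 ≤ lam)
    (hB : ‖B‖ ≤ lam) (x : WithLp 2 (E × F)) {q : WithLp 2 (E × F)} (hq : q.snd = B q.fst) :
    ‖x.snd - B x.fst‖ ≤ √2 * lam * dist x q := by
  have hsplit : x.snd - B x.fst = (x - q).snd + B (-(x - q).fst) := by
    simp only [WithLp.sub_fst, WithLp.sub_snd, neg_sub, map_sub, hq]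
    abel
  have hBfst : ‖B (-(x - q).fst)‖ ≤ lam * ‖(x - q).fst‖ := by
    simpa only [norm_neg] using B.le_of_opNorm_le hB (-(x - q).fst)
  calc ‖x.snd - B x.fst‖ ≤ ‖(x - q).snd‖ + lam * ‖(x - q).fst‖ := by
        rw [hsplit]; exact norm_add_le_of_le le_rfl hBfst
    _ ≤ lam * (‖(x - q).fst‖ + ‖(x - q).snd‖) := by nlinarith [norm_nonneg (x - q).snd]
    _ ≤ lam * (√2 * ‖x - q‖) := by
        gcongr
        exact WithLp.prod_norm_fst_add_norm_snd_le_of_L2 _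
    _ = √2 * lam * dist x q := by rw [dist_eq_norm]; ring

theorem norm_toLp_apply_le (A : E →L[ℝ] F) (u : E) :
    ‖WithLp.toLp 2 (u, A u)‖ ≤ √(1 + ‖A‖ ^ 2) * ‖u‖ := by
  rw [WithLp.prod_norm_eq_of_L2, ← Real.sqrt_sq (norm_nonneg u), ← Real.sqrt_mul (by positivity)]
  gcongr
  have hAu := pow_le_pow_left₀ (norm_nonneg _) (A.le_opNorm u) 2
  change ‖u‖ ^ 2 + ‖A u‖ ^ 2 ≤ _
  rw [mul_pow] at hAu
  linarith

end NormedSpace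

section InnerProductSpace

variable {E F : Type*} [NormedAddCommGroup E] [InnerProductSpace ℝ E] [NormedAddCommGroup F]
  [InnerProductSpace ℝ F]

theorem smul_mem_graphSet (A : E →L[ℝ] F) (c : ℝ) {p : WithLp 2 (E × F)} (hp : p ∈ graphSet A) :
    c • p ∈ graphSet A := by
  change c • p.snd = A (c • p.fst)
  rw [map_smul]
  exact congrArg (c • ·) hp

theorem inv_norm_smul_toLp_mem_graphSet_inter_sphere (A : E →L[ℝ] F) {u : E} (hu : u ≠ 0) :
    ‖WithLp.toLp 2 (u, A u)‖⁻¹ • WithLp.toLp 2 (u, A u) ∈ graphSet A ∩ sphere 0 1 := by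
  have hv : WithLp.toLp 2 (u, A u) ≠ 0 := fun h => hu (congrArg WithLp.fst h)
  exact ⟨smul_mem_graphSet A _ rfl, by
    rw [mem_sphere_zero_iff_norm, norm_smul, norm_inv, norm_norm,
      inv_mul_cancel₀ (norm_ne_zero_iff.2 hv)]⟩

theorem norm_sub_apply_le_sphereDist_graphSet {A B : E →L[ℝ] F} {lam : ℝ} (hlam : 1 ≤ lam)
    (hA : ‖A‖ ≤ lam) (hB : ‖B‖ ≤ lam) {u : E} (hu : ‖u‖ = 1) :
    ‖(A - B) u‖ ≤ √2 * lam * √(1 + lam ^ 2) * sphereDist (graphSet A) (graphSet B) := by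
  have hu0 : u ≠ 0 := norm_ne_zero_iff.1 (hu ▸ one_ne_zero)
  set v := WithLp.toLp 2 (u, A u)
  set p := ‖v‖⁻¹ • v
  have hpA : p ∈ graphSet A ∩ sphere 0 1 := inv_norm_smul_toLp_mem_graphSet_inter_sphere A hu0
  have hB_ne : (graphSet B ∩ sphere 0 1).Nonempty :=
    ⟨_, inv_norm_smul_toLp_mem_graphSet_inter_sphere B hu0⟩
  have hfin : hausdorffEDist (graphSet A ∩ sphere 0 1) (graphSet B ∩ sphere 0 1) ≠ ⊤ :=
    hausdorffEDist_ne_top_of_nonempty_of_bounded ⟨p, hpA⟩ hB_ne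
      (isBounded_sphere.subset inter_subset_right) (isBounded_sphere.subset inter_subset_right)
  have hv : ‖v‖ ≤ √(1 + lam ^ 2) := by
    calc ‖v‖ ≤ √(1 + ‖A‖ ^ 2) * ‖u‖ := norm_toLp_apply_le A u
      _ ≤ √(1 + lam ^ 2) := by rw [hu, mul_one]; gcongr
  have hp : ‖p.snd - B p.fst‖ ≤ √2 * lam * infDist p (graphSet B ∩ sphere 0 1) := by
    have hc : 0 < √2 * lam := by positivity
    rw [← div_le_iff₀' hc, le_infDist hB_ne]
    rintro q ⟨hqB, -⟩
    rw [div_le_iff₀' hc]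
    exact norm_snd_sub_apply_fst_le_dist hlam hB p hqB
  have hv0 : v ≠ 0 := fun h => hu0 (congrArg WithLp.fst h)
  have hpAB : p.snd - B p.fst = ‖v‖⁻¹ • (A - B) u := by simp [p, v, smul_sub]
  calc ‖(A - B) u‖ = ‖v‖ * ‖p.snd - B p.fst‖ := by
        rw [hpAB, norm_smul, norm_inv, norm_norm, mul_inv_cancel_left₀ (norm_ne_zero_iff.2 hv0)]
    _ ≤ √(1 + lam ^ 2) * (√2 * lam * infDist p (graphSet B ∩ sphere 0 1)) := by
        gcongr
    _ = √2 * lam * √(1 + lam ^ 2) * infDist p (graphSet B ∩ sphere 0 1) := by ring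
    _ ≤ √2 * lam * √(1 + lam ^ 2) * sphereDist (graphSet A) (graphSet B) := by
        gcongr
        exact infDist_le_hausdorffDist_of_mem hpA hfin

end InnerProductSpace

theorem graph_sphereDist_ge_general {E F : Type*} [NormedAddCommGroup E] [InnerProductSpace ℝ E]
    [NormedAddCommGroup F] [InnerProductSpace ℝ F]
    (lam : ℝ) (hlam : 1 ≤ lam) (A B : E →L[ℝ] F) (hA : ‖A‖ ≤ lam) (hB : ‖B‖ ≤ lam) :
    Real.sqrt 2 / (2 * lam * Real.sqrt (1 + lam ^ 2)) * ‖A - B‖ ≤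
      sphereDist (graphSet A) (graphSet B) := by
  have hlam0 : 0 < lam := one_pos.trans_le hlam
  have hδ : 0 ≤ sphereDist (graphSet A) (graphSet B) := hausdorffDist_nonneg
  have hAB : ‖A - B‖ ≤ √2 * lam * √(1 + lam ^ 2) * sphereDist (graphSet A) (graphSet B) :=
    (A - B).opNorm_le_of_unit_norm (by positivity) fun _ hu =>
      norm_sub_apply_le_sphereDist_graphSet hlam hA hB hu
  calc √2 / (2 * lam * √(1 + lam ^ 2)) * ‖A - B‖
      ≤ √2 / (2 * lam * √(1 + lam ^ 2)) * (√2 * lam * √(1 + lam ^ 2) *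
          sphereDist (graphSet A) (graphSet B)) := by gcongr
    _ = sphereDist (graphSet A) (graphSet B) := by
        field_simp
        rw [Real.sq_sqrt zero_le_two]

/-- **Inequality (3.1) of the paper.** The Grassmannian distance between the graphs of two
continuous linear maps of operator norm at most `λ` dominates
`(√2 / (2λ√(1+λ²))) · ‖A − B‖`. -/
theorem graph_sphereDist_ge {E F : Type*} [NormedAddCommGroup E] [InnerProductSpace ℝ E]
    [NormedAddCommGroup F] [InnerProductSpace ℝ F]
    [FiniteDimensional ℝ E] [FiniteDimensional ℝ F] [Nontrivial E]
    (lam : ℝ) (hlam : 1 ≤ lam) (A B : E →L[ℝ] F) (hA : ‖A‖ ≤ lam) (hB : ‖B‖ ≤ lam) :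
    Real.sqrt 2 / (2 * lam * Real.sqrt (1 + lam ^ 2)) * ‖A - B‖ ≤
      sphereDist (graphSet A) (graphSet B) :=
  graph_sphereDist_ge_general lam hlam A B hA hB
end

section
/- Let E and F be finite-dimensional real inner product spaces, let B ⊆ E be an open convex set, let λ ≥ 1 and K > 0 be real numbers, and let f : B → F be differentiable with ‖Df_z‖ ≤ λ (operator norm) for every z ∈ B. Assume that for all z, w ∈ B one has δ(Γ_{Df_z}, Γ_{Df_w}) ≤ K · ‖(z, f(z)) − (w, f(w))‖, the norm being the Euclidean product norm on E × F. Then for all z, w ∈ B, ‖Df_z − Df_w‖ ≤ K·λ·√(2+2λ²)·(1+λ)·‖z − w‖; in particular Df is Lipschitz. -/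
open Set Filter

set_option maxHeartbeats 1000000

private lemma withLp_fst_le {E F : Type*} [NormedAddCommGroup E] [NormedAddCommGroup F]
    (x : WithLp 2 (E × F)) : ‖x.fst‖ ≤ ‖x‖ := by
  have h := WithLp.prod_norm_sq_eq_of_L2 x
  nlinarith [norm_nonneg x.fst, norm_nonneg x.snd, norm_nonneg x]

private lemma withLp_snd_le {E F : Type*} [NormedAddCommGroup E] [NormedAddCommGroup F]
    (x : WithLp 2 (E × F)) : ‖x.snd‖ ≤ ‖x‖ := by
  have h := WithLp.prod_norm_sq_eq_of_L2 x
  nlinarith [norm_nonneg x.fst, norm_nonneg x.snd, norm_nonneg x]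

private lemma graphSet_isClosed {E F : Type*} [NormedAddCommGroup E] [InnerProductSpace ℝ E]
    [NormedAddCommGroup F] [InnerProductSpace ℝ F] (A : E →L[ℝ] F) :
    IsClosed (graphSet A) := by
  have : graphSet A = (fun q : WithLp 2 (E × F) =>
      (WithLp.equiv 2 (E × F) q).2 - A (WithLp.equiv 2 (E × F) q).1) ⁻¹' {0} := by
    ext q; simp [graphSet, sub_eq_zero]
  rw [this]
  have hc : Continuous (fun q : WithLp 2 (E × F) => (WithLp.equiv 2 (E × F) q)) :=
    (WithLp.prodContinuousLinearEquiv 2 ℝ E F).continuous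
  exact IsClosed.preimage
    ((continuous_snd.comp hc).sub (A.continuous.comp (continuous_fst.comp hc))) isClosed_singleton

/-- The normalized point of the graph above a nonzero vector lies in `graphSet ∩ sphere`. -/
private lemma graph_point_mem {E F : Type*} [NormedAddCommGroup E] [InnerProductSpace ℝ E]
    [NormedAddCommGroup F] [InnerProductSpace ℝ F] (A : E →L[ℝ] F) {u : E} (hu : u ≠ 0) :
    (‖(WithLp.equiv 2 (E × F)).symm (u, A u)‖⁻¹ •
        (WithLp.equiv 2 (E × F)).symm (u, A u)) ∈ graphSet A ∩ Metric.sphere 0 1 := by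
  set pre : WithLp 2 (E × F) := (WithLp.equiv 2 (E × F)).symm (u, A u) with hpre
  have hufst : pre.fst = u := rfl
  have hc0 : (0 : ℝ) < ‖pre‖ := by
    have h1 : ‖u‖ ≤ ‖pre‖ := by rw [← hufst]; exact withLp_fst_le pre
    have := norm_pos_iff.mpr hu
    linarith
  constructor
  · show (‖pre‖⁻¹ • pre).snd = A (‖pre‖⁻¹ • pre).fst
    have h1 : (‖pre‖⁻¹ • pre).snd = ‖pre‖⁻¹ • A u := rfl
    have h2 : (‖pre‖⁻¹ • pre).fst = ‖pre‖⁻¹ • u := rfl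
    rw [h1, h2, map_smul]
  · simp only [Metric.mem_sphere, dist_zero_right, norm_smul, norm_inv, norm_norm]
    field_simp

/-- **Claim 3.3 of the paper (quantitative form).** If `f : B → F` is differentiable on an
open convex set `B` with `‖Df_z‖ ≤ λ` everywhere, and the tangent-plane map
`(z, f z) ↦ Γ_{Df_z}` is `K`-Lipschitz in the Grassmannian distance `δ`, then `Df` is
Lipschitz with constant `K·λ·√(2+2λ²)·(1+λ)`. -/
theorem deriv_lipschitz_of_gauss_lipschitz {E F : Type*}
    [NormedAddCommGroup E] [InnerProductSpace ℝ E]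
    [NormedAddCommGroup F] [InnerProductSpace ℝ F]
    [FiniteDimensional ℝ E] [FiniteDimensional ℝ F]
    (B : Set E) (hB : IsOpen B) (hBconv : Convex ℝ B)
    (lam K : ℝ) (hlam : 1 ≤ lam) (hK : 0 < K)
    (f : E → F) (f' : E → E →L[ℝ] F)
    (hderiv : ∀ z ∈ B, HasFDerivWithinAt f (f' z) B z)
    (hbound : ∀ z ∈ B, ‖f' z‖ ≤ lam)
    (hgauss : ∀ z ∈ B, ∀ w ∈ B,
      sphereDist (graphSet (f' z)) (graphSet (f' w)) ≤
        K * ‖(WithLp.equiv 2 (E × F)).symm (z, f z) -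
              (WithLp.equiv 2 (E × F)).symm (w, f w)‖) :
    ∀ z ∈ B, ∀ w ∈ B,
      ‖f' z - f' w‖ ≤ K * lam * Real.sqrt (2 + 2 * lam ^ 2) * (1 + lam) * ‖z - w‖ := by
  intro z hz w hw
  have hlam0 : (0 : ℝ) < lam := lt_of_lt_of_le one_pos hlam
  set A := f' z with hA
  set Bm := f' w with hBm
  set D := sphereDist (graphSet A) (graphSet Bm) with hDdef
  have hD0 : 0 ≤ D := Metric.hausdorffDist_nonneg
  set s : ℝ := Real.sqrt (1 + lam ^ 2) with hsdef
  have hs0 : 0 ≤ s := Real.sqrt_nonneg _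
  -- key pointwise estimate
  have key : ∀ u : E, ‖A u - Bm u‖ ≤ s * (1 + lam) * D * ‖u‖ := by
    intro u
    rcases eq_or_ne u 0 with rfl | hu
    · simp
    have hupos : (0 : ℝ) < ‖u‖ := norm_pos_iff.mpr hu
    set pre : WithLp 2 (E × F) := (WithLp.equiv 2 (E × F)).symm (u, A u) with hpre
    set c : ℝ := ‖pre‖ with hcdef
    have hufst : pre.fst = u := rfl
    have husnd : pre.snd = A u := rfl
    have hc0 : (0 : ℝ) < c := lt_of_lt_of_le hupos (by rw [← hufst]; exact withLp_fst_le pre)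
    -- c ≤ s * ‖u‖
    have hAu : ‖A u‖ ≤ lam * ‖u‖ := by
      calc ‖A u‖ ≤ ‖A‖ * ‖u‖ := A.le_opNorm u
        _ ≤ lam * ‖u‖ := by
            have := hbound z hz
            exact mul_le_mul_of_nonneg_right this (norm_nonneg u)
    have hcsq : c ^ 2 = ‖u‖ ^ 2 + ‖A u‖ ^ 2 := by
      rw [hcdef, WithLp.prod_norm_sq_eq_of_L2, hufst, husnd]
    have hcle : c ≤ s * ‖u‖ := by
      have h1 : c ^ 2 ≤ (1 + lam ^ 2) * ‖u‖ ^ 2 := by nlinarith [norm_nonneg (A u)]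
      have h2 : c = Real.sqrt (c ^ 2) := (Real.sqrt_sq hc0.le).symm
      rw [h2]
      calc Real.sqrt (c ^ 2) ≤ Real.sqrt ((1 + lam ^ 2) * ‖u‖ ^ 2) := Real.sqrt_le_sqrt h1
        _ = s * ‖u‖ := by
            rw [Real.sqrt_mul (by nlinarith), Real.sqrt_sq (norm_nonneg u)]
    set p : WithLp 2 (E × F) := c⁻¹ • pre with hp
    have hpS : p ∈ graphSet A ∩ Metric.sphere 0 1 := graph_point_mem A hu
    -- the two sets
    have hSne : (graphSet A ∩ Metric.sphere (0 : WithLp 2 (E × F)) 1).Nonempty := ⟨p, hpS⟩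
    have hTne : (graphSet Bm ∩ Metric.sphere (0 : WithLp 2 (E × F)) 1).Nonempty :=
      ⟨_, graph_point_mem Bm hu⟩
    have hSb : Bornology.IsBounded (graphSet A ∩ Metric.sphere (0 : WithLp 2 (E × F)) 1) :=
      (Metric.isBounded_sphere).subset inter_subset_right
    have hTb : Bornology.IsBounded (graphSet Bm ∩ Metric.sphere (0 : WithLp 2 (E × F)) 1) :=
      (Metric.isBounded_sphere).subset inter_subset_right
    have hfin : EMetric.hausdorffEdist (graphSet A ∩ Metric.sphere (0 : WithLp 2 (E × F)) 1)
        (graphSet Bm ∩ Metric.sphere 0 1) ≠ ⊤ :=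
      Metric.hausdorffEdist_ne_top_of_nonempty_of_bounded hSne hTne hSb hTb
    have hTcomp : IsCompact (graphSet Bm ∩ Metric.sphere (0 : WithLp 2 (E × F)) 1) :=
      ((isCompact_sphere (0 : WithLp 2 (E × F)) 1).inter_left (graphSet_isClosed Bm))
    obtain ⟨q, hqT, hq⟩ := hTcomp.exists_infDist_eq_dist hTne p
    have hdistpq : dist p q ≤ D := by
      rw [← hq]
      exact Metric.infDist_le_hausdorffDist_of_mem hpS hfin
    have hq1 : q ∈ graphSet Bm := hqT.1
    have hqgraph : q.snd = Bm q.fst := hq1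
    -- component estimates
    have hsub_fst : (p - q).fst = p.fst - q.fst := rfl
    have hsub_snd : (p - q).snd = p.snd - q.snd := rfl
    have hnormpq : ‖p - q‖ ≤ D := by rwa [dist_eq_norm] at hdistpq
    have hfst : ‖p.fst - q.fst‖ ≤ D := by
      rw [← hsub_fst]; exact le_trans (withLp_fst_le _) hnormpq
    have hsnd : ‖p.snd - q.snd‖ ≤ D := by
      rw [← hsub_snd]; exact le_trans (withLp_snd_le _) hnormpq
    have hpfst : p.fst = c⁻¹ • u := rfl
    have hpsnd : p.snd = c⁻¹ • A u := rfl
    -- main computation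
    have hAu_eq : A u = c • p.snd := by rw [hpsnd, smul_inv_smul₀ hc0.ne']
    have hstep1 : ‖A u - Bm u‖ ≤ c * ‖p.snd - q.snd‖ + ‖Bm (c • q.fst) - Bm u‖ := by
      calc ‖A u - Bm u‖ = ‖(c • p.snd - c • q.snd) + (Bm (c • q.fst) - Bm u)‖ := by
            rw [hAu_eq, hqgraph, map_smul]; congr 1; abel
        _ ≤ ‖c • p.snd - c • q.snd‖ + ‖Bm (c • q.fst) - Bm u‖ := norm_add_le _ _
        _ = c * ‖p.snd - q.snd‖ + ‖Bm (c • q.fst) - Bm u‖ := by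
            rw [← smul_sub, norm_smul, Real.norm_eq_abs, abs_of_pos hc0]
    have hstep2 : ‖Bm (c • q.fst) - Bm u‖ ≤ lam * (c * D) := by
      have h1 : ‖c • q.fst - u‖ = c * ‖q.fst - p.fst‖ := by
        rw [show c • q.fst - u = c • (q.fst - p.fst) by
          rw [smul_sub, hpfst, smul_inv_smul₀ hc0.ne']]
        rw [norm_smul, Real.norm_eq_abs, abs_of_pos hc0]
      calc ‖Bm (c • q.fst) - Bm u‖ = ‖Bm (c • q.fst - u)‖ := by rw [map_sub]
        _ ≤ ‖Bm‖ * ‖c • q.fst - u‖ := Bm.le_opNorm _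
        _ ≤ lam * ‖c • q.fst - u‖ :=
            mul_le_mul_of_nonneg_right (hbound w hw) (norm_nonneg _)
        _ = lam * (c * ‖q.fst - p.fst‖) := by rw [h1]
        _ ≤ lam * (c * D) := by
            have : ‖q.fst - p.fst‖ ≤ D := by rwa [norm_sub_rev]
            exact mul_le_mul_of_nonneg_left
              (mul_le_mul_of_nonneg_left this hc0.le) hlam0.le
    calc ‖A u - Bm u‖ ≤ c * ‖p.snd - q.snd‖ + ‖Bm (c • q.fst) - Bm u‖ := hstep1
      _ ≤ c * D + lam * (c * D) := by
          gcongr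
      _ = c * ((1 + lam) * D) := by ring
      _ ≤ (s * ‖u‖) * ((1 + lam) * D) := by
          have h : (0 : ℝ) ≤ (1 + lam) * D := mul_nonneg (by linarith) hD0
          exact mul_le_mul_of_nonneg_right hcle h
      _ = s * (1 + lam) * D * ‖u‖ := by ring
  -- operator norm bound
  have hop : ‖A - Bm‖ ≤ s * (1 + lam) * D := by
    apply ContinuousLinearMap.opNorm_le_bound
    · exact mul_nonneg (mul_nonneg hs0 (by linarith)) hD0
    · intro u
      rw [ContinuousLinearMap.sub_apply]
      exact key u
  -- bound on D
  have hf : ‖f z - f w‖ ≤ lam * ‖z - w‖ :=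
    hBconv.norm_image_sub_le_of_norm_hasFDerivWithin_le hderiv hbound hw hz
  have hprod : ‖(WithLp.equiv 2 (E × F)).symm (z, f z) -
      (WithLp.equiv 2 (E × F)).symm (w, f w)‖ ≤ s * ‖z - w‖ := by
    set x : WithLp 2 (E × F) := (WithLp.equiv 2 (E × F)).symm (z, f z) -
      (WithLp.equiv 2 (E × F)).symm (w, f w) with hx
    have hxfst : x.fst = z - w := rfl
    have hxsnd : x.snd = f z - f w := rfl
    have hxsq : ‖x‖ ^ 2 = ‖z - w‖ ^ 2 + ‖f z - f w‖ ^ 2 := by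
      rw [WithLp.prod_norm_sq_eq_of_L2, hxfst, hxsnd]
    have h1 : ‖x‖ ^ 2 ≤ (1 + lam ^ 2) * ‖z - w‖ ^ 2 := by
      nlinarith [norm_nonneg (f z - f w), norm_nonneg (z - w)]
    calc ‖x‖ = Real.sqrt (‖x‖ ^ 2) := (Real.sqrt_sq (norm_nonneg x)).symm
      _ ≤ Real.sqrt ((1 + lam ^ 2) * ‖z - w‖ ^ 2) := Real.sqrt_le_sqrt h1
      _ = s * ‖z - w‖ := by
          rw [Real.sqrt_mul (by nlinarith), Real.sqrt_sq (norm_nonneg _)]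
  have hDle : D ≤ K * (s * ‖z - w‖) := by
    calc D ≤ K * ‖(WithLp.equiv 2 (E × F)).symm (z, f z) -
        (WithLp.equiv 2 (E × F)).symm (w, f w)‖ := hgauss z hz w hw
      _ ≤ K * (s * ‖z - w‖) := mul_le_mul_of_nonneg_left hprod hK.le
  -- constant comparison : s^2 = 1 + lam^2 ≤ lam * √(2 + 2 lam^2)
  have hconst : (1 + lam ^ 2) ≤ lam * Real.sqrt (2 + 2 * lam ^ 2) := by
    have h1 : (1 + lam ^ 2) ^ 2 ≤ lam ^ 2 * (2 + 2 * lam ^ 2) := by nlinarith [sq_nonneg (lam ^ 2 - 1)]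
    calc (1 + lam ^ 2) = Real.sqrt ((1 + lam ^ 2) ^ 2) := (Real.sqrt_sq (by nlinarith)).symm
      _ ≤ Real.sqrt (lam ^ 2 * (2 + 2 * lam ^ 2)) := Real.sqrt_le_sqrt h1
      _ = lam * Real.sqrt (2 + 2 * lam ^ 2) := by
          rw [Real.sqrt_mul (sq_nonneg lam), Real.sqrt_sq hlam0.le]
  have hssq : s * s = 1 + lam ^ 2 := Real.mul_self_sqrt (by nlinarith)
  calc ‖A - Bm‖ ≤ s * (1 + lam) * D := hop
    _ ≤ s * (1 + lam) * (K * (s * ‖z - w‖)) := by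
        have h : (0 : ℝ) ≤ s * (1 + lam) := mul_nonneg hs0 (by linarith)
        exact mul_le_mul_of_nonneg_left hDle h
    _ = K * (1 + lam ^ 2) * (1 + lam) * ‖z - w‖ := by rw [← hssq]; ring
    _ ≤ K * (lam * Real.sqrt (2 + 2 * lam ^ 2)) * (1 + lam) * ‖z - w‖ := by
        gcongr
    _ = K * lam * Real.sqrt (2 + 2 * lam ^ 2) * (1 + lam) * ‖z - w‖ := by ring
end

section
/- Let E be a finite-dimensional real inner product space and let V, W be linear subspaces of E with dim V = dim W = d ≥ 1. If δ(V, W) < 1/3, then the orthogonal projection of E onto V, restricted to W, is a linear isomorphism from W onto V. -/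
open Set Filter

/-! A unit vector of `W` orthogonal to `V` is at distance `√2` from every unit vector of `V`,
so `δ(V, W) < √2` forces the projection onto `V` to be injective on `W`; as `V` and `W` have
the same dimension, it is then bijective. -/

open Metric

theorem Submodule.inter_sphere_nonempty {F : Type*} [NormedAddCommGroup F] [NormedSpace ℝ F]
    {p : Submodule ℝ F} (hp : p ≠ ⊥) : ((p : Set F) ∩ sphere 0 1).Nonempty := by
  have : Nontrivial p := Submodule.nontrivial_iff_ne_bot.mpr hp
  obtain ⟨x, hx⟩ := (NormedSpace.sphere_nonempty (x := (0 : p)) (r := 1)).mpr zero_le_one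
  exact ⟨x, x.2, by simpa using hx⟩

theorem exists_mem_inter_sphere_dist_lt_of_sphereDist_lt {F : Type*} [NormedAddCommGroup F]
    {S T : Set F} {r : ℝ} (hS : (S ∩ sphere 0 1).Nonempty) (h : sphereDist S T < r)
    {y : F} (hy : y ∈ T ∩ sphere 0 1) : ∃ x ∈ S ∩ sphere 0 1, dist x y < r :=
  exists_dist_lt_of_hausdorffDist_lt' hy h <|
    hausdorffEDist_ne_top_of_nonempty_of_bounded hS ⟨y, hy⟩
      (isBounded_sphere.subset inter_subset_right) (isBounded_sphere.subset inter_subset_right)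

theorem dist_eq_sqrt_two_of_inner_eq_zero {F : Type*} [NormedAddCommGroup F]
    [InnerProductSpace ℝ F] {x y : F} (hxy : inner ℝ x y = 0) (hx : ‖x‖ = 1) (hy : ‖y‖ = 1) :
    dist x y = √2 := by
  rw [dist_eq_norm, eq_comm, Real.sqrt_eq_iff_mul_self_eq zero_le_two (norm_nonneg _),
    norm_sub_sq_eq_norm_sq_add_norm_sq_real hxy, hx, hy]
  norm_num

section

variable {E : Type*} [NormedAddCommGroup E] [InnerProductSpace ℝ E]

theorem Submodule.disjoint_orthogonal_of_sphereDist_lt {V W : Submodule ℝ E} (hV : V ≠ ⊥)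
    (h : sphereDist (V : Set E) (W : Set E) < √2) : Disjoint W Vᗮ := by
  refine Submodule.disjoint_def.mpr fun w hwW hwV => ?_
  by_contra hw
  set u := ‖w‖⁻¹ • w
  have hu : ‖u‖ = 1 := norm_smul_inv_norm hw
  obtain ⟨v, ⟨hvV, hv⟩, hvu⟩ := exists_mem_inter_sphere_dist_lt_of_sphereDist_lt
    (Submodule.inter_sphere_nonempty hV) h ⟨W.smul_mem _ hwW, mem_sphere_zero_iff_norm.mpr hu⟩
  have hperp : inner ℝ v u = 0 := Vᗮ.smul_mem _ hwV v hvV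
  rw [dist_eq_sqrt_two_of_inner_eq_zero hperp (mem_sphere_zero_iff_norm.mp hv) hu] at hvu
  exact hvu.false

theorem Submodule.injective_orthogonalProjection_comp_subtype_of_sphereDist_lt
    {V W : Submodule ℝ E} [V.HasOrthogonalProjection] (hV : V ≠ ⊥)
    (h : sphereDist (V : Set E) (W : Set E) < √2) :
    Function.Injective ((V.orthogonalProjectionOnto : E →ₗ[ℝ] V) ∘ₗ W.subtype) := by
  refine (injective_iff_map_eq_zero _).mpr fun w hw => ?_
  have hwV : (w : E) ∈ Vᗮ := Submodule.orthogonalProjectionOnto_eq_zero_iff.mp hw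
  exact Subtype.ext <|
    Submodule.disjoint_def.mp (disjoint_orthogonal_of_sphereDist_lt hV h) _ w.2 hwV

end

/-- If `V` and `W` are `d`-dimensional subspaces (`d ≥ 1`) of a finite-dimensional real
inner product space with `δ(V, W) < 1/3`, then the orthogonal projection onto `V`
restricted to `W` is a linear isomorphism from `W` onto `V`. -/
theorem orthogonalProjection_bijective_of_sphereDist_lt {E : Type*}
    [NormedAddCommGroup E] [InnerProductSpace ℝ E] [FiniteDimensional ℝ E]
    (V W : Submodule ℝ E) (d : ℕ) (hd : 1 ≤ d)
    (hV : Module.finrank ℝ V = d) (hW : Module.finrank ℝ W = d)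
    (hδ : sphereDist (V : Set E) (W : Set E) < 1 / 3) :
    Function.Bijective (fun w : W => V.orthogonalProjection (w : E)) := by
  have hV_ne_bot : V ≠ ⊥ := by
    rintro rfl
    rw [finrank_bot] at hV
    omega
  have h_sqrt_two : sphereDist (V : Set E) (W : Set E) < √2 :=
    hδ.trans (by rw [Real.lt_sqrt (by norm_num)]; norm_num)
  have hinj := Submodule.injective_orthogonalProjection_comp_subtype_of_sphereDist_lt hV_ne_bot
    h_sqrt_two
  exact ⟨hinj, (LinearMap.injective_iff_surjective_of_finrank_eq_finrank (hW.trans hV.symm)).mp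
    hinj⟩
end

section
/- There do not exist ε > 0, C > 0 and a differentiable function g : (0, ε) → ℝ such that: 0 < g(t) < 1 for all t ∈ (0, ε); g(t) → 0 as t → 0⁺; |g'(t)| ≤ C·g(t)·|log g(t)| for all t ∈ (0, ε); and the quotient g'(t)/(g(t)·log g(t)) converges in the extended real numbers as t → 0⁺. -/
open Set Filter

/-- **Contradiction in the Remark following Corollary 3.2 of the paper.** There is no
differentiable function `g : (0, ε) → ℝ` with `0 < g < 1`, `g → 0` as `t → 0⁺`,
satisfying `|g'| ≤ C·g·|log g|` on `(0, ε)`, and such that `g'/(g·log g)` converges in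
the extended reals as `t → 0⁺`. -/
theorem no_function_with_log_lipschitz_bound :
    ¬ ∃ (ε C : ℝ) (g g' : ℝ → ℝ), 0 < ε ∧ 0 < C ∧
      (∀ t ∈ Set.Ioo 0 ε, HasDerivAt g (g' t) t) ∧
      (∀ t ∈ Set.Ioo 0 ε, 0 < g t ∧ g t < 1) ∧
      Tendsto g (nhdsWithin 0 (Set.Ioi 0)) (nhds 0) ∧
      (∀ t ∈ Set.Ioo 0 ε, |g' t| ≤ C * g t * |Real.log (g t)|) ∧
      (∃ l : EReal, Tendsto (fun t => ((g' t / (g t * Real.log (g t)) : ℝ) : EReal))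
        (nhdsWithin 0 (Set.Ioi 0)) (nhds l)) := by
  rintro ⟨ε, C, g, g', hε, hC, hderiv, hg01, hg0, hbound, -⟩
  set h : ℝ → ℝ := fun t => Real.log (-Real.log (g t)) with hh
  set q : ℝ → ℝ := fun t => g' t / (g t * Real.log (g t)) with hq
  -- basic facts on (0, ε)
  have hlogneg : ∀ t ∈ Set.Ioo 0 ε, Real.log (g t) < 0 := fun t ht =>
    Real.log_neg (hg01 t ht).1 (hg01 t ht).2
  -- derivative of h
  have hhd : ∀ t ∈ Set.Ioo 0 ε, HasDerivAt h (q t) t := by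
    intro t ht
    have h1 : HasDerivAt (fun t => Real.log (g t)) (g' t / g t) t :=
      (hderiv t ht).log (hg01 t ht).1.ne'
    have h2 : HasDerivAt (fun t => -Real.log (g t)) (-(g' t / g t)) t := h1.neg
    have h3 : HasDerivAt h ((-(g' t / g t)) / (-Real.log (g t))) t :=
      h2.log (by simpa using (hlogneg t ht).ne)
    convert h3 using 1
    rw [hq, neg_div_neg_eq, div_div]
  -- |q| ≤ C
  have hqle : ∀ t ∈ Set.Ioo 0 ε, |q t| ≤ C := by
    intro t ht
    have hgpos := (hg01 t ht).1
    have hlpos : 0 < |Real.log (g t)| := abs_pos.2 (hlogneg t ht).ne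
    have hden : 0 < g t * |Real.log (g t)| := mul_pos hgpos hlpos
    rw [hq, abs_div, abs_mul, abs_of_pos hgpos, div_le_iff₀ hden]
    calc |g' t| ≤ C * g t * |Real.log (g t)| := hbound t ht
      _ = C * (g t * |Real.log (g t)|) := by ring
  -- Lipschitz bound via MVT
  set t0 : ℝ := ε / 2 with ht0def
  have ht0 : t0 ∈ Set.Ioo 0 ε := ⟨by positivity, by linarith⟩
  have hlip : ∀ t ∈ Set.Ioo 0 ε, |h t - h t0| ≤ C * ε := by
    intro t ht
    have := (convex_Ioo (0:ℝ) ε).norm_image_sub_le_of_norm_hasDerivWithin_le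
      (fun x hx => (hhd x hx).hasDerivWithinAt)
      (fun x hx => by simpa [Real.norm_eq_abs] using hqle x hx) ht0 ht
    have habs : ‖t - t0‖ ≤ ε := by
      rw [Real.norm_eq_abs, abs_sub_le_iff]
      constructor <;> [linarith [ht.2, ht0.1]; linarith [ht.1, ht0.2]]
    calc |h t - h t0| ≤ C * ‖t - t0‖ := by simpa [Real.norm_eq_abs] using this
      _ ≤ C * ε := by nlinarith
  -- h tends to +∞ as t → 0⁺
  have hmem : ∀ᶠ t in nhdsWithin 0 (Set.Ioi 0), t ∈ Set.Ioo 0 ε :=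
    Ioo_mem_nhdsGT_of_mem ⟨le_refl 0, hε⟩
  have hgpos' : ∀ᶠ t in nhdsWithin 0 (Set.Ioi 0), g t ∈ Set.Ioi 0 :=
    hmem.mono fun t ht => (hg01 t ht).1
  have hg0' : Tendsto g (nhdsWithin 0 (Set.Ioi 0)) (nhdsWithin 0 (Set.Ioi 0)) :=
    tendsto_nhdsWithin_of_tendsto_nhds_of_eventually_within g hg0 hgpos'
  have hlogbot : Tendsto (fun t => Real.log (g t)) (nhdsWithin 0 (Set.Ioi 0)) atBot :=
    Real.tendsto_log_nhdsGT_zero.comp hg0'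
  have hnegtop : Tendsto (fun t => -Real.log (g t)) (nhdsWithin 0 (Set.Ioi 0)) atTop :=
    tendsto_neg_atTop_iff.mpr hlogbot
  have htop : Tendsto h (nhdsWithin 0 (Set.Ioi 0)) atTop :=
    Real.tendsto_log_atTop.comp hnegtop
  -- contradiction
  have hev : ∀ᶠ t in nhdsWithin 0 (Set.Ioi 0),
      h t0 + C * ε < h t ∧ t ∈ Set.Ioo 0 ε :=
    (htop.eventually (eventually_gt_atTop _)).and hmem
  obtain ⟨t, hgt, ht⟩ := hev.exists
  have := hlip t ht
  have := abs_sub_le_iff.1 this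
  linarith [this.1]
end

section
/- Define f : ℝ → ℝ by f(x) = x³·exp(-1/x) for x > 0 and f(x) = 0 for x ≤ 0. Then: (i) for every α ∈ (0,1) there exist C > 0 and δ > 0 such that |f'(x)| ≤ C·f(x)^α for all x ∈ (0, δ); and (ii) f'(x)/f(x) → +∞ as x → 0⁺ (so no such bound holds with exponent α = 1). -/
/-!
For `x > 0` one has `f' x = (3 x² + x) e^{-1/x} = (3/x + 1/x²) f x`, so the logarithmic derivative
blows up at `0⁺`. On the other hand `f' x ≤ 4 e^{-1/x} = 4 e^{-α/x} e^{-(1-α)/x}` for `x < 1`, and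
`e^{-(1-α)/x} ≤ x^{3α}` near `0⁺` because the exponential beats every power; this gives
`|f' x| ≤ 4 x^{3α} e^{-α/x} = 4 f(x)^α`.
-/

open Set Filter

/-- The function of Example 3.4 of the paper: `f x = x³·exp(-1/x)` for `x > 0`
and `f x = 0` for `x ≤ 0`. -/
noncomputable def exampleFun : ℝ → ℝ :=
  fun x => if 0 < x then x ^ 3 * Real.exp (-1 / x) else 0

open Real Topology

lemma exampleFun_of_pos {x : ℝ} (hx : 0 < x) : exampleFun x = x ^ 3 * exp (-1 / x) :=
  if_pos hx

lemma exampleFun_rpow {x : ℝ} (hx : 0 < x) (α : ℝ) :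
    exampleFun x ^ α = x ^ (3 * α) * exp (-α / x) := by
  rw [exampleFun_of_pos hx, mul_rpow (by positivity) (exp_pos _).le, ← exp_mul,
    ← rpow_natCast, ← rpow_mul hx.le]
  congr 2
  ring

lemma hasDerivAt_exampleFun {x : ℝ} (hx : 0 < x) :
    HasDerivAt exampleFun ((3 * x ^ 2 + x) * exp (-1 / x)) x := by
  have hev : exampleFun =ᶠ[𝓝 x] fun y => y ^ 3 * exp (-1 / y) := by
    filter_upwards [Ioi_mem_nhds hx] with y hy
    exact exampleFun_of_pos hy
  have hinv : HasDerivAt (fun y : ℝ => -1 / y) (1 / x ^ 2) x := by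
    simpa [neg_div, one_div] using (hasDerivAt_inv hx.ne').fun_neg
  refine (((hasDerivAt_pow 3 x).mul ((hasDerivAt_exp _).comp x hinv)).congr_of_eventuallyEq
    hev).congr_deriv ?_
  simp only [Function.comp_apply]
  field_simp
  ring

lemma deriv_exampleFun {x : ℝ} (hx : 0 < x) :
    deriv exampleFun x = (3 * x ^ 2 + x) * exp (-1 / x) :=
  (hasDerivAt_exampleFun hx).deriv

lemma deriv_exampleFun_div_exampleFun {x : ℝ} (hx : 0 < x) :
    deriv exampleFun x / exampleFun x = 3 * x⁻¹ + x⁻¹ ^ 2 := by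
  rw [deriv_exampleFun hx, exampleFun_of_pos hx, mul_div_mul_right _ _ (exp_ne_zero _)]
  field_simp

lemma abs_deriv_exampleFun_le {x : ℝ} (hx₀ : 0 < x) (hx₁ : x < 1) :
    |deriv exampleFun x| ≤ 4 * exp (-1 / x) := by
  rw [deriv_exampleFun hx₀, abs_of_nonneg (by positivity)]
  gcongr
  nlinarith

lemma eventually_exp_neg_div_le_rpow {c : ℝ} (hc : 0 < c) (p : ℝ) :
    ∀ᶠ x in 𝓝[>] 0, exp (-c / x) ≤ x ^ p := by
  have hlim : Tendsto (fun x : ℝ => x⁻¹ ^ p * exp (-c * x⁻¹)) (𝓝[>] 0) (𝓝 0) :=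
    (tendsto_rpow_mul_exp_neg_mul_atTop_nhds_zero p c hc).comp tendsto_inv_nhdsGT_zero
  filter_upwards [hlim.eventually (ge_mem_nhds one_pos), self_mem_nhdsWithin] with x hle hx
  rw [inv_rpow (mem_Ioi.mp hx).le, inv_mul_le_iff₀ (rpow_pos_of_pos hx _), mul_one] at hle
  simpa [div_eq_mul_inv, neg_mul] using hle

lemma eventually_abs_deriv_exampleFun_le_rpow {α : ℝ} (hα : α < 1) :
    ∀ᶠ x in 𝓝[>] 0, |deriv exampleFun x| ≤ 4 * exampleFun x ^ α := by
  filter_upwards [eventually_exp_neg_div_le_rpow (sub_pos.mpr hα) (3 * α),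
    Ioo_mem_nhdsGT one_pos] with x hexp ⟨hx₀, hx₁⟩
  have hsplit : exp (-1 / x) = exp (-α / x) * exp (-(1 - α) / x) := by
    rw [← exp_add]
    ring_nf
  calc |deriv exampleFun x| ≤ 4 * (exp (-α / x) * exp (-(1 - α) / x)) :=
        hsplit ▸ abs_deriv_exampleFun_le hx₀ hx₁
    _ ≤ 4 * (exp (-α / x) * x ^ (3 * α)) := by gcongr
    _ = 4 * exampleFun x ^ α := by rw [exampleFun_rpow hx₀, mul_comm (exp _)]

/-- **Analytic content of Example 3.4 of the paper.** For every `α ∈ (0,1)` there are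
`C > 0` and `δ > 0` with `|f'(x)| ≤ C·f(x)^α` for `x ∈ (0, δ)`, while
`f'(x)/f(x) → +∞` as `x → 0⁺`, so no such bound holds with `α = 1`. -/
theorem exampleFun_holder_bounds :
    (∀ α ∈ Set.Ioo (0 : ℝ) 1, ∃ C > (0 : ℝ), ∃ δ > (0 : ℝ),
      ∀ x ∈ Set.Ioo (0 : ℝ) δ, |deriv exampleFun x| ≤ C * (exampleFun x) ^ α) ∧
    Tendsto (fun x => deriv exampleFun x / exampleFun x)
      (nhdsWithin 0 (Set.Ioi 0)) atTop := by
  constructor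
  · rintro α ⟨-, hα⟩
    obtain ⟨δ, hδ, hbound⟩ :=
      mem_nhdsGT_iff_exists_Ioo_subset.mp (eventually_abs_deriv_exampleFun_le_rpow hα)
    exact ⟨4, by norm_num, δ, hδ, hbound⟩
  · have hpoly : Tendsto (fun t : ℝ => 3 * t + t ^ 2) atTop atTop :=
      (tendsto_id.const_mul_atTop (by norm_num)).atTop_add_atTop (tendsto_pow_atTop two_ne_zero)
    refine (hpoly.comp tendsto_inv_nhdsGT_zero).congr' ?_
    filter_upwards [self_mem_nhdsWithin] with x hx
    exact (deriv_exampleFun_div_exampleFun hx).symm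
end

section
/- Let m ≥ 1 be an integer and let γ > 1 + 1/m be a real number. Define h : (0, ∞) → ℝ by h(x) = x³·exp(-1/x^m). Then there exist C > 0 and δ > 0 such that h'(x) ≤ C·h(x)·(-log h(x))^γ for all x ∈ (0, δ). -/
/-!
Writing `h x = xⁿ·exp(-1/xᵐ)`, one has `h' = h·(n/x + m/x^(m+1))` and
`-log h = 1/xᵐ - n·log x ≥ 1/xᵐ` on `(0, 1]`. So `h' ≤ (n + m)·h/x^(m+1)` there, and
`1/x^(m+1) = (1/xᵐ)^(1 + 1/m) ≤ (1/xᵐ)^γ ≤ (-log h)^γ` because `1/xᵐ ≥ 1` and `γ ≥ 1 + 1/m`.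
-/

open Real

theorem hasDerivAt_pow_mul_exp_neg_one_div_pow (n m : ℕ) {x : ℝ} (hx : x ≠ 0) :
    HasDerivAt (fun x : ℝ => x ^ n * exp (-1 / x ^ m))
      (x ^ n * exp (-1 / x ^ m) * (n * x⁻¹ + m * x⁻¹ ^ (m + 1))) x := by
  have hinner : HasDerivAt (fun y : ℝ => -1 / y ^ m) (m * x⁻¹ ^ (m + 1)) x := by
    refine ((hasDerivAt_const x (-1 : ℝ)).div (hasDerivAt_pow m x)
      (pow_ne_zero _ hx)).congr_deriv ?_
    rcases m with _ | m
    · simp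
    · simp only [Nat.add_sub_cancel, inv_pow]; field_simp; ring
  refine ((hasDerivAt_pow n x).mul hinner.exp).congr_deriv ?_
  rcases n with _ | n
  · simp
  · simp only [Nat.add_sub_cancel, inv_pow]; field_simp; ring

theorem neg_log_pow_mul_exp_neg_one_div_pow (n m : ℕ) {x : ℝ} (hx : 0 < x) :
    -log (x ^ n * exp (-1 / x ^ m)) = x⁻¹ ^ m - n * log x := by
  rw [log_mul (by positivity) (exp_pos _).ne', log_exp, log_pow, inv_pow]
  ring

theorem pow_rpow_one_add_inv {y : ℝ} (hy : 0 ≤ y) {m : ℕ} (hm : m ≠ 0) :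
    (y ^ m) ^ (1 + 1 / (m : ℝ)) = y ^ (m + 1) := by
  rw [← rpow_natCast y m, ← rpow_mul hy, ← rpow_natCast]
  congr 1
  push_cast
  field_simp

theorem inv_pow_succ_le_neg_log_rpow (n : ℕ) {m : ℕ} (hm : m ≠ 0) {γ : ℝ}
    (hγ : 1 + 1 / (m : ℝ) ≤ γ) {x : ℝ} (hx₀ : 0 < x) (hx₁ : x ≤ 1) :
    x⁻¹ ^ (m + 1) ≤ (-log (x ^ n * exp (-1 / x ^ m))) ^ γ := by
  have hy : 1 ≤ x⁻¹ ^ m := one_le_pow₀ (one_le_inv₀ hx₀ |>.mpr hx₁)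
  have hγ₀ : 0 ≤ γ := by linarith [one_div_nonneg.mpr (m.cast_nonneg : (0 : ℝ) ≤ m)]
  have hlog : x⁻¹ ^ m ≤ -log (x ^ n * exp (-1 / x ^ m)) := by
    rw [neg_log_pow_mul_exp_neg_one_div_pow n m hx₀]
    nlinarith [log_nonpos hx₀.le hx₁, (n.cast_nonneg : (0 : ℝ) ≤ n)]
  calc x⁻¹ ^ (m + 1) = (x⁻¹ ^ m) ^ (1 + 1 / (m : ℝ)) :=
        (pow_rpow_one_add_inv (inv_nonneg.mpr hx₀.le) hm).symm
    _ ≤ (x⁻¹ ^ m) ^ γ := rpow_le_rpow_of_exponent_le hy hγ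
    _ ≤ _ := rpow_le_rpow (by positivity) hlog hγ₀

theorem deriv_pow_mul_exp_neg_one_div_pow_le (n : ℕ) {m : ℕ} (hm : m ≠ 0) {γ : ℝ}
    (hγ : 1 + 1 / (m : ℝ) ≤ γ) {x : ℝ} (hx₀ : 0 < x) (hx₁ : x ≤ 1) :
    deriv (fun x : ℝ => x ^ n * exp (-1 / x ^ m)) x ≤
      (n + m) * (x ^ n * exp (-1 / x ^ m)) * (-log (x ^ n * exp (-1 / x ^ m))) ^ γ := by
  rw [(hasDerivAt_pow_mul_exp_neg_one_div_pow n m hx₀.ne').deriv]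
  calc x ^ n * exp (-1 / x ^ m) * (n * x⁻¹ + m * x⁻¹ ^ (m + 1))
      ≤ x ^ n * exp (-1 / x ^ m) * (n * x⁻¹ ^ (m + 1) + m * x⁻¹ ^ (m + 1)) := by
        gcongr
        exact le_self_pow₀ (one_le_inv₀ hx₀ |>.mpr hx₁) (by omega)
    _ = (n + m) * (x ^ n * exp (-1 / x ^ m)) * x⁻¹ ^ (m + 1) := by ring
    _ ≤ _ := by gcongr; exact inv_pow_succ_le_neg_log_rpow n hm hγ hx₀ hx₁

/-- **Analytic content of Examples 3.5 and 3.6 of the paper.** For an integer `m ≥ 1`,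
the function `h x = x³·exp(-1/xᵐ)` satisfies, for every real `γ > 1 + 1/m`, a bound
`h'(x) ≤ C·h(x)·(-log h(x))^γ` for all sufficiently small `x > 0`. -/
theorem example_log_lipschitz_bound (m : ℕ) (hm : 1 ≤ m) (γ : ℝ)
    (hγ : 1 + 1 / (m : ℝ) < γ) :
    ∃ C > (0 : ℝ), ∃ δ > (0 : ℝ), ∀ x ∈ Set.Ioo (0 : ℝ) δ,
      deriv (fun x : ℝ => x ^ 3 * Real.exp (-1 / x ^ m)) x ≤
        C * (x ^ 3 * Real.exp (-1 / x ^ m)) *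
          (-Real.log (x ^ 3 * Real.exp (-1 / x ^ m))) ^ γ := by
  refine ⟨3 + m, by positivity, 1, one_pos, fun x hx => ?_⟩
  exact_mod_cast deriv_pow_mul_exp_neg_one_div_pow_le 3 (by omega) hγ.le hx.1 hx.2.le
end
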